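/- Let m ≥ 3 and let K be the (m+3)×(m+3) Cartan matrix of the tree T_{2,3,m} (a central vertex with three attached paths consisting of 1, 2, and m−1 vertices respectively; K has 2's on the diagonal, −1 at each pair of adjacent vertices, and 0 elsewhere). Then the characteristic polynomial of the Coxeter transformation C(K) equals X^{m+3} + X^{m+2} − (X³ + X⁴ + ⋯ + X^m) + X + 1. -/

import Mathlib

/-!
Write the Cartan matrix as `K = U + Uᵀ` with `U` unipotent upper triangular. Multiplying the
reflections `1 - E_ii K` in increasing order gives `U C = -Uᵀ`, hence, as `det U = 1`,
`χ_C = det (X U + Uᵀ)`. Let `D_n` be this determinant for the first `n` vertices. From `n = 6` on,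
the last vertex is a leaf on the long arm, and expanding there gives
`D_{n+2} = (X + 1) D_{n+1} - X D_n`; the claimed polynomials satisfy the same recurrence and agree
with `D_5`, `D_6`.
-/

open Matrix Polynomial

namespace Matrix

variable {R : Type*} [CommRing R] {n : ℕ}

def upperUnipotent (K : Matrix (Fin n) (Fin n) R) : Matrix (Fin n) (Fin n) R :=
  of fun i j => if i = j then 1 else if i < j then K i j else 0

def simpleReflection (K : Matrix (Fin n) (Fin n) R) (i : Fin n) : Matrix (Fin n) (Fin n) R :=
  1 - single i i 1 * K

def firstRows (K : Matrix (Fin n) (Fin n) R) (l : ℕ) : Matrix (Fin n) (Fin n) R :=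
  of fun a b => if (a : ℕ) < l then K a b else 0

def coxeterTransformation (K : Matrix (Fin n) (Fin n) R) : Matrix (Fin n) (Fin n) R :=
  (List.ofFn (simpleReflection K)).prod

theorem det_upperUnipotent (K : Matrix (Fin n) (Fin n) R) : (upperUnipotent K).det = 1 := by
  rw [det_of_isUpperTriangular]
  · exact Finset.prod_eq_one fun i _ => by simp [upperUnipotent]
  · intro i j (hji : j < i)
    simp [upperUnipotent, hji.ne', not_lt_of_gt hji]

theorem upperUnipotent_sub_firstRows_mul_single (K : Matrix (Fin n) (Fin n) R) (l : Fin n) :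
    (upperUnipotent K - firstRows K l) * single l l 1 = single l l 1 := by
  ext a b
  by_cases hb : b = l
  · subst hb
    rcases lt_trichotomy a b with h | rfl | h
    · simp [upperUnipotent, firstRows, h, h.ne, h.ne']
    · simp [upperUnipotent, firstRows]
    · simp [upperUnipotent, firstRows, h.ne, h.ne', not_lt_of_gt h]
  · simp [hb, Ne.symm hb]

theorem upperUnipotent_mul_prod_take (K : Matrix (Fin n) (Fin n) R) {l : ℕ} (hl : l ≤ n) :
    upperUnipotent K * ((List.ofFn (simpleReflection K)).take l).prod =
      upperUnipotent K - firstRows K l := by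
  induction l with
  | zero => ext; simp [firstRows]
  | succ l ih =>
    rw [List.prod_take_succ _ l (by simp; omega), ← mul_assoc, ih (by omega),
      List.getElem_ofFn, simpleReflection, mul_sub, mul_one, ← mul_assoc,
      upperUnipotent_sub_firstRows_mul_single K ⟨l, by omega⟩]
    ext a b
    by_cases ha : a = ⟨l, by omega⟩
    · subst ha
      simp [firstRows]
    · have : (a : ℕ) ≠ l := fun h => ha (Fin.ext h)
      simp [firstRows, ha, single_mul_apply_of_ne, Nat.le_iff_lt_or_eq, this]

theorem upperUnipotent_mul_coxeterTransformation {K : Matrix (Fin n) (Fin n) R}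
    (hdiag : ∀ i, K i i = 2) (hsymm : K.IsSymm) :
    upperUnipotent K * coxeterTransformation K = -(upperUnipotent K)ᵀ := by
  rw [coxeterTransformation, ← List.take_length (l := List.ofFn _),
    upperUnipotent_mul_prod_take K (by simp)]
  ext i j
  rcases lt_trichotomy i j with h | rfl | h
  · simp [upperUnipotent, firstRows, h, h.ne, h.ne', not_lt_of_gt h]
  · norm_num [upperUnipotent, firstRows, hdiag]
  · simp [upperUnipotent, firstRows, h, h.ne, h.ne', not_lt_of_gt h, hsymm.apply]

theorem charpoly_eq_det_of_mul_eq_neg_transpose {ι : Type*} [Fintype ι] [DecidableEq ι]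
    {A B : Matrix ι ι R} (hB : B.det = 1) (hAB : B * A = -Bᵀ) :
    A.charpoly = ((X : R[X]) • B.map C + Bᵀ.map C).det := by
  have hBC : B.map C * A.map C = -Bᵀ.map (C : R →+* R[X]) := by
    rw [← Matrix.map_mul, hAB, Matrix.map_neg _ (map_neg C)]
  have hBdet : (B.map (C : R →+* R[X])).det = 1 := by
    rw [← RingHom.mapMatrix_apply, ← RingHom.map_det, hB, map_one]
  rw [charpoly, ← one_mul (charmatrix A).det, ← hBdet, ← det_mul, charmatrix, mul_sub,
    RingHom.mapMatrix_apply, hBC, sub_neg_eq_add, scalar_apply, ← smul_eq_mul_diagonal]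

theorem det_succ_succ_of_last_row_col_eq_zero (M : Matrix (Fin (n + 2)) (Fin (n + 2)) R)
    (hrow : ∀ j : Fin n, M (Fin.last _) j.castSucc.castSucc = 0)
    (hcol : ∀ i : Fin n, M i.castSucc.castSucc (Fin.last _) = 0) :
    M.det = M (Fin.last _) (Fin.last _) * (M.submatrix Fin.castSucc Fin.castSucc).det -
      M (Fin.last _) (Fin.last n).castSucc * M (Fin.last n).castSucc (Fin.last _) *
        (M.submatrix (Fin.castSucc ∘ Fin.castSucc) (Fin.castSucc ∘ Fin.castSucc)).det := by
  have hminor : (M.submatrix Fin.castSucc (Fin.last n).castSucc.succAbove).det =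
      M (Fin.last n).castSucc (Fin.last _) *
        (M.submatrix (Fin.castSucc ∘ Fin.castSucc) (Fin.castSucc ∘ Fin.castSucc)).det := by
    rw [det_succ_column _ (Fin.last n), Fin.sum_univ_castSucc]
    have hcols : (Fin.last n).castSucc.succAbove ∘ Fin.castSucc = Fin.castSucc ∘ Fin.castSucc :=
      funext fun i => Fin.succAbove_castSucc_of_lt _ _ (Fin.castSucc_lt_last i)
    simp [hcol, hcols]
  rw [det_succ_row M (Fin.last _), Fin.sum_univ_castSucc, Fin.sum_univ_castSucc]
  simp [hrow, hminor]
  ring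

end Matrix

-- Edges of `T_{2,3,m}` in the numbering of the statement, oriented towards the larger index.
def T23Edge (i j : ℕ) : Prop :=
  (i = 0 ∧ j = 1) ∨ (i = 0 ∧ j = 2) ∨ (i = 2 ∧ j = 3) ∨ (i = 0 ∧ j = 4) ∨ (4 ≤ i ∧ j = i + 1)

instance : DecidableRel T23Edge := fun i j => by unfold T23Edge; infer_instance

theorem T23Edge.lt {i j : ℕ} (h : T23Edge i j) : i < j := by unfold T23Edge at h; omega

def t23Cartan (n : ℕ) : Matrix (Fin n) (Fin n) ℤ :=
  of fun i j => if i = j then 2 else if T23Edge i j ∨ T23Edge j i then -1 else 0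

theorem t23Cartan_isSymm (n : ℕ) : (t23Cartan n).IsSymm := by
  ext i j
  simp only [t23Cartan, transpose_apply, of_apply, eq_comm, or_comm]

noncomputable def t23Pencil (n : ℕ) : Matrix (Fin n) (Fin n) ℤ[X] :=
  (X : ℤ[X]) • (upperUnipotent (t23Cartan n)).map C + (upperUnipotent (t23Cartan n))ᵀ.map C

theorem t23Pencil_apply {n : ℕ} (i j : Fin n) :
    t23Pencil n i j =
      if i = j then X + 1 else if T23Edge i j then -X else if T23Edge j i then -1 else 0 := by
  rcases lt_trichotomy i j with h | rfl | h
  · have : ¬ T23Edge j i := fun e => absurd e.lt (by simp [h.le])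
    by_cases e : T23Edge i j <;>
      simp [t23Pencil, upperUnipotent, t23Cartan, h, h.ne, h.ne', not_lt_of_gt h, e, this]
  · simp [t23Pencil, upperUnipotent]
  · have : ¬ T23Edge i j := fun e => absurd e.lt (by simp [h.le])
    by_cases e : T23Edge j i <;>
      simp [t23Pencil, upperUnipotent, t23Cartan, h, h.ne, h.ne', not_lt_of_gt h, e, this]

theorem t23Pencil_submatrix_castSucc (n : ℕ) :
    (t23Pencil (n + 1)).submatrix Fin.castSucc Fin.castSucc = t23Pencil n := by
  ext i j
  simp [t23Pencil_apply]

set_option maxRecDepth 10000 in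
theorem det_t23Pencil_five : (t23Pencil 5).det = X ^ 5 + X ^ 4 + X + 1 := by
  simp [det_succ_row_zero, Fin.sum_univ_succ, t23Pencil_apply, T23Edge, Fin.succAbove]
  ring

set_option maxRecDepth 10000 in
theorem det_t23Pencil_six : (t23Pencil 6).det = X ^ 6 + X ^ 5 - X ^ 3 + X + 1 := by
  simp [det_succ_row_zero, Fin.sum_univ_succ, t23Pencil_apply, T23Edge, Fin.succAbove]
  ring

theorem det_t23Pencil_add_six (k : ℕ) :
    (t23Pencil (k + 6)).det = (X + 1) * (t23Pencil (k + 5)).det - X * (t23Pencil (k + 4)).det := by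
  rw [det_succ_succ_of_last_row_col_eq_zero, t23Pencil_submatrix_castSucc,
    ← submatrix_submatrix, t23Pencil_submatrix_castSucc, t23Pencil_submatrix_castSucc]
  · simp [t23Pencil_apply, T23Edge, Fin.ext_iff]
  all_goals
    intro i
    have := i.is_lt
    rw [t23Pencil_apply, if_neg, if_neg, if_neg] <;>
      simp only [T23Edge, Fin.ext_iff, Fin.val_last, Fin.val_castSucc] <;> omega

noncomputable def t23CoxeterPoly (m : ℕ) : ℤ[X] :=
  X ^ (m + 3) + X ^ (m + 2) - (∑ i ∈ Finset.Icc 3 m, X ^ i) + X + 1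

theorem t23CoxeterPoly_add_two {m : ℕ} (hm : 2 ≤ m) :
    t23CoxeterPoly (m + 2) = (X + 1) * t23CoxeterPoly (m + 1) - X * t23CoxeterPoly m := by
  simp only [t23CoxeterPoly, Finset.sum_Icc_succ_top (by omega : 3 ≤ m + 2),
    Finset.sum_Icc_succ_top (by omega : 3 ≤ m + 1)]
  ring

theorem det_t23Pencil {m : ℕ} (hm : 2 ≤ m) : (t23Pencil (m + 3)).det = t23CoxeterPoly m := by
  obtain ⟨k, rfl⟩ := Nat.exists_eq_add_of_le' hm
  suffices ∀ j, (t23Pencil (j + 5)).det = t23CoxeterPoly (j + 2) ∧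
      (t23Pencil (j + 6)).det = t23CoxeterPoly (j + 3) from (this k).1
  intro j
  induction j with
  | zero =>
    refine ⟨det_t23Pencil_five.trans ?_, det_t23Pencil_six.trans ?_⟩ <;>
      simp [t23CoxeterPoly]
  | succ j ih =>
    refine ⟨ih.2, ?_⟩
    have hrec : (t23Pencil (j + 7)).det = _ := det_t23Pencil_add_six (j + 1)
    have hf : t23CoxeterPoly (j + 4) = _ := t23CoxeterPoly_add_two (m := j + 2) (by omega)
    rw [hrec, hf, ih.1, ih.2]

theorem charpoly_coxeterTransformation_t23Cartan {m : ℕ} (hm : 2 ≤ m) :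
    (coxeterTransformation (t23Cartan (m + 3))).charpoly = t23CoxeterPoly m := by
  rw [charpoly_eq_det_of_mul_eq_neg_transpose (det_upperUnipotent _)
    (upperUnipotent_mul_coxeterTransformation (by simp [t23Cartan]) (t23Cartan_isSymm _))]
  exact det_t23Pencil hm

/-- For `m ≥ 3`, let `K` be the Cartan matrix of the tree `T_{2,3,m}`:
the central vertex `0` has three attached paths with `1`, `2`, and `m−1` vertices
(vertex `1`; vertices `2–3`; vertices `4–5–⋯–(m+2)`). Then the characteristic polynomial
of the Coxeter transformation `C(K)` equals
`X^{m+3} + X^{m+2} − (X³ + X⁴ + ⋯ + X^m) + X + 1`. -/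
theorem stmt_14 (m : ℕ) (hm : 3 ≤ m)
    (K : Matrix (Fin (m + 3)) (Fin (m + 3)) ℤ)
    (hK : ∀ i j : Fin (m + 3), K i j =
      if i = j then 2
      else if (((i : ℕ) = 0 ∧ (j : ℕ) = 1) ∨ ((i : ℕ) = 0 ∧ (j : ℕ) = 2) ∨
               ((i : ℕ) = 2 ∧ (j : ℕ) = 3) ∨ ((i : ℕ) = 0 ∧ (j : ℕ) = 4) ∨
               (4 ≤ (i : ℕ) ∧ (j : ℕ) = (i : ℕ) + 1 ∧ (j : ℕ) ≤ m + 2)) ∨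
              (((j : ℕ) = 0 ∧ (i : ℕ) = 1) ∨ ((j : ℕ) = 0 ∧ (i : ℕ) = 2) ∨
               ((j : ℕ) = 2 ∧ (i : ℕ) = 3) ∨ ((j : ℕ) = 0 ∧ (i : ℕ) = 4) ∨
               (4 ≤ (j : ℕ) ∧ (i : ℕ) = (j : ℕ) + 1 ∧ (i : ℕ) ≤ m + 2))
      then -1 else 0)
    (R : Fin (m + 3) → Matrix (Fin (m + 3)) (Fin (m + 3)) ℤ)
    (hR : ∀ i a b : Fin (m + 3), R i a b =
      if a = i then (if i = b then 1 else 0) - K i b else (if a = b then 1 else 0))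
    (C : Matrix (Fin (m + 3)) (Fin (m + 3)) ℤ)
    (hC : C = (List.ofFn fun i => R i).prod) :
    C.charpoly = X ^ (m + 3) + X ^ (m + 2) - (∑ i ∈ Finset.Icc 3 m, X ^ i) + X + 1 := by
  have hKt : K = t23Cartan (m + 3) := by
    ext i j
    have hi : (i : ℕ) ≤ m + 2 := Nat.le_of_lt_succ i.is_lt
    have hj : (j : ℕ) ≤ m + 2 := Nat.le_of_lt_succ j.is_lt
    simp only [hK, hi, hj, and_true]
    rfl
  have hRs : R = simpleReflection K := by
    funext i
    ext a b
    by_cases ha : a = i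
    · simp [hR, ha, simpleReflection, one_apply]
    · simp [hR, ha, simpleReflection, single_mul_apply_of_ne, one_apply]
  subst hC hRs hKt
  exact charpoly_coxeterTransformation_t23Cartan (by omega)
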